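/- Let d_A ≥ 2, ε ∈ (0,1], and θ ∈ (π/2, π] with cos θ = −ε/2. Let O be the d_A×d_A diagonal matrix with diagonal entries ε·(e^{iθ}, e^{−iθ}, e^{iθ}, e^{−iθ}, …) alternating, with the last diagonal entry equal to 0 if d_A is odd. Then (1 + O)†(1 + O) = 1 (i.e. 1 + O is unitary) and ‖O‖_op = ε. -/

import Mathlib

noncomputable section
open scoped Kronecker Matrix ComplexOrder
open MeasureTheory

namespace Stmt

instance {m n : Type*} : MeasurableSpace (Matrix m n ℂ) := by unfold Matrix; infer_instance

/-- The square root of a positive semidefinite matrix, as `Matrix.PosSemidef.sqrt` was defined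
in the older Mathlib (removed since). -/
def psdSqrt {n : Type*} [Fintype n] [DecidableEq n] {A : Matrix n n ℂ} (hA : A.PosSemidef) :
    Matrix n n ℂ :=
  hA.1.eigenvectorUnitary.1 * Matrix.diagonal ((↑) ∘ (√·) ∘ hA.1.eigenvalues) *
    (star hA.1.eigenvectorUnitary : Matrix n n ℂ)

/-- Trace norm `‖X‖₁ = Tr √(XᴴX)` (sum of singular values). -/
def traceNorm {m n : Type*} [Fintype m] [Fintype n] [DecidableEq n] (X : Matrix m n ℂ) : ℝ :=
  (psdSqrt (Matrix.posSemidef_conjTranspose_mul_self X)).trace.re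

/-- ℓ²→ℓ² operator norm of a matrix (largest singular value). -/
def opNorm {m n : Type*} [Fintype m] [Fintype n] [DecidableEq n] (X : Matrix m n ℂ) : ℝ :=
  ‖LinearMap.toContinuousLinearMap (Matrix.toEuclideanLin X)‖

/-- Frobenius norm `‖X‖₂ = √(Tr(XᴴX))`. -/
def frobNorm {m n : Type*} [Fintype m] [Fintype n] (X : Matrix m n ℂ) : ℝ :=
  Real.sqrt ((Xᴴ * X).trace.re)

/-- Projector `|Ψ⟩⟨Ψ|` onto the maximally entangled unit vector
`|Ψ⟩ = (1/√d) ∑ᵢ |i⟩⊗|i⟩`. -/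
def Psi (d : ℕ) : Matrix (Fin d × Fin d) (Fin d × Fin d) ℂ :=
  fun p q => if p.1 = p.2 ∧ q.1 = q.2 then (1 / (d : ℂ)) else 0

/-- Partial trace over the environment (last) factor `E`. -/
def ptrE {A A' B E : Type*} [Fintype E] (M : Matrix (A × B × E) (A' × B × E) ℂ) :
    Matrix (A × B) (A' × B) ℂ :=
  fun x y => ∑ e, M (x.1, x.2, e) (y.1, y.2, e)

/-- Partial trace over the last factor `E` of a fourfold product. -/
def ptrE4 {A F B E : Type*} [Fintype E]
    (M : Matrix (A × F × B × E) (A × F × B × E) ℂ) : Matrix (A × F × B) (A × F × B) ℂ :=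
  fun x y => ∑ e, M (x.1, x.2.1, x.2.2, e) (y.1, y.2.1, y.2.2, e)

/-- Partial trace over the first factor `F`. -/
def ptrF {F X Y : Type*} [Fintype F] (M : Matrix (F × X) (F × Y) ℂ) : Matrix X Y ℂ :=
  fun x y => ∑ f, M (f, x) (f, y)

/-- Partial trace over the second factor. -/
def ptrSecond {F X : Type*} [Fintype X] (M : Matrix (F × X) (F × X) ℂ) : Matrix F F ℂ :=
  fun f f' => ∑ x, M (f, x) (f', x)

/-- The diagonal matrix `O = ε·diag(e^{iθ}, e^{−iθ}, …)` (last entry `0` if `d` is odd). -/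
def Omat (d : ℕ) (ε θ : ℝ) : Matrix (Fin d) (Fin d) ℂ :=
  Matrix.diagonal fun j =>
    if Odd d ∧ (j : ℕ) = d - 1 then 0
    else if Even (j : ℕ) then (ε : ℂ) * Complex.exp (Complex.I * (θ : ℂ))
    else (ε : ℂ) * Complex.exp (-(Complex.I * (θ : ℂ)))

/-- The traceless version `Ō = O − (Tr O / d)·1`. -/
def Obar (d : ℕ) (ε θ : ℝ) : Matrix (Fin d) (Fin d) ℂ :=
  Omat d ε θ - ((Omat d ε θ).trace / (d : ℂ)) • 1

/-- Identification of `B × E` indices with `Fin (r·d_B)`. -/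
def idxBE {d_B r : ℕ} (p : Fin d_B × Fin r) : Fin (r * d_B) :=
  finCongr (Nat.mul_comm d_B r) (finProdFinEquiv p)

/-- Reindex the rows of a square matrix on `ℂ^{r·d_B}` so that it becomes a map
`ℂ^{r d_B} → ℂ^{d_B}⊗ℂ^{r}`. -/
def toBE {d_B r : ℕ} (M : Matrix (Fin (r * d_B)) (Fin (r * d_B)) ℂ) :
    Matrix (Fin d_B × Fin r) (Fin (r * d_B)) ℂ :=
  fun p a => M (idxBE p) a

/-- `Ψ` with its second (column) tensor factor reindexed as `B × E`. -/
def PsiBE (d_B r : ℕ) :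
    Matrix (Fin (r * d_B) × Fin (r * d_B)) (Fin (r * d_B) × (Fin d_B × Fin r)) ℂ :=
  fun p q => Psi (r * d_B) p (q.1, idxBE q.2)

/-- The inclusion `S` of the first `d_A` standard basis vectors of `ℂ^{d_B}⊗ℂ^{r}`. -/
def Smat (d_A d_B r : ℕ) : Matrix (Fin d_B × Fin r) (Fin d_A) ℂ :=
  fun p a => if ((finProdFinEquiv p : Fin (d_B * r)) : ℕ) = (a : ℕ) then 1 else 0

/-- `V = √(1−ε²)·|0⟩_F ⊗ V₀ + ε·|1⟩_F ⊗ V₁`. -/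
def Vfull {d_A d_B r : ℕ} (ε : ℝ) (V0 VU : Matrix (Fin d_B × Fin r) (Fin d_A) ℂ) :
    Matrix (Fin 2 × Fin d_B × Fin r) (Fin d_A) ℂ :=
  fun p a =>
    (if p.1 = 0 then (Real.sqrt (1 - ε ^ 2) : ℂ) * V0 p.2 a else 0) +
    (if p.1 = 1 then (ε : ℂ) * VU p.2 a else 0)

/-- Kraus operator `K_i = (1 ⊗ ⟨i|_E) V₀`. -/
def Kraus {d_A d_B r : ℕ} (V0 : Matrix (Fin d_B × Fin r) (Fin d_A) ℂ) (i : Fin r) :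
    Matrix (Fin d_B) (Fin d_A) ℂ :=
  fun b a => V0 (b, i) a

/-- `V_U = U(1+O)U†` regarded as a map `ℂ^{r d_B} → ℂ^{d_B}⊗ℂ^{r}`. -/
def Veq (d_B r : ℕ) (ε θ : ℝ) (U : Matrix (Fin (r * d_B)) (Fin (r * d_B)) ℂ) :
    Matrix (Fin d_B × Fin r) (Fin (r * d_B)) ℂ :=
  toBE (U * (1 + Omat (r * d_B) ε θ) * Uᴴ)

/-- Choi state `J_U = Tr_E[(1 ⊗ V_U) Ψ (1 ⊗ V_U)†]` in the case `d_A = r·d_B`. -/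
def Jeq (d_B r : ℕ) (ε θ : ℝ) (U : Matrix (Fin (r * d_B)) (Fin (r * d_B)) ℂ) :
    Matrix (Fin (r * d_B) × Fin d_B) (Fin (r * d_B) × Fin d_B) ℂ :=
  ptrE (((1 : Matrix (Fin (r * d_B)) (Fin (r * d_B)) ℂ) ⊗ₖ Veq d_B r ε θ U) * Psi (r * d_B) *
    ((1 : Matrix (Fin (r * d_B)) (Fin (r * d_B)) ℂ) ⊗ₖ Veq d_B r ε θ U)ᴴ)

/-- Choi state `J_U = Tr_E[(1 ⊗ V_U) Ψ (1 ⊗ V_U)†]` in the case `d_A ≤ r·d_B`. -/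
def Jle (d_A d_B r : ℕ) (ε : ℝ) (V0 : Matrix (Fin d_B × Fin r) (Fin d_A) ℂ)
    (U : Matrix (Fin d_B × Fin r) (Fin d_B × Fin r) ℂ) :
    Matrix (Fin d_A × Fin 2 × Fin d_B) (Fin d_A × Fin 2 × Fin d_B) ℂ :=
  ptrE4 (((1 : Matrix (Fin d_A) (Fin d_A) ℂ) ⊗ₖ Vfull ε V0 (U * Smat d_A d_B r)) * Psi d_A *
    ((1 : Matrix (Fin d_A) (Fin d_A) ℂ) ⊗ₖ Vfull ε V0 (U * Smat d_A d_B r))ᴴ)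

/-- `C = Tr_E[(1 ⊗ Ṽ₀) Ψ (1 ⊗ (Ṽ_{U₁} − Ṽ_{U₂}))†]`. -/
def Cmat (d_A d_B r : ℕ) (V0 : Matrix (Fin d_B × Fin r) (Fin d_A) ℂ)
    (U₁ U₂ : Matrix (Fin d_B × Fin r) (Fin d_B × Fin r) ℂ) :
    Matrix (Fin d_A × Fin d_B) (Fin d_A × Fin d_B) ℂ :=
  ptrE (((1 : Matrix (Fin d_A) (Fin d_A) ℂ) ⊗ₖ V0) * Psi d_A *
    ((1 : Matrix (Fin d_A) (Fin d_A) ℂ) ⊗ₖ (U₁ * Smat d_A d_B r - U₂ * Smat d_A d_B r))ᴴ)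

/-- `A_U = Tr_E[(1 ⊗ U Ō U†) Ψ]`. -/
def Amat (d_B r : ℕ) (ε θ : ℝ) (U : Matrix (Fin (r * d_B)) (Fin (r * d_B)) ℂ) :
    Matrix (Fin (r * d_B) × Fin d_B) (Fin (r * d_B) × Fin d_B) ℂ :=
  ptrE (((1 : Matrix (Fin (r * d_B)) (Fin (r * d_B)) ℂ) ⊗ₖ toBE (U * Obar (r * d_B) ε θ * Uᴴ)) *
    PsiBE d_B r)


lemma opNorm_diagonal_eq {d : ℕ} (v : Fin d → ℂ) (c : ℝ) (hle : ∀ j, ‖v j‖ ≤ c)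
    (j₀ : Fin d) (hj : ‖v j₀‖ = c) : opNorm (Matrix.diagonal v) = c := by
  have hc : 0 ≤ c := hj ▸ norm_nonneg _
  apply le_antisymm
  · apply ContinuousLinearMap.opNorm_le_bound _ hc
    intro x
    rw [EuclideanSpace.norm_eq, EuclideanSpace.norm_eq]
    have hcoord : ∀ i, ‖(LinearMap.toContinuousLinearMap (Matrix.toEuclideanLin (Matrix.diagonal v)) x) i‖
        = ‖v i * x i‖ := by
      intro i
      simp [Matrix.toEuclideanLin_apply, Matrix.mulVec_diagonal]
    rw [show c * Real.sqrt (∑ i, ‖x i‖ ^ 2) = Real.sqrt (∑ i, c^2 * ‖x i‖ ^ 2) by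
      rw [← Finset.mul_sum, Real.sqrt_mul (by positivity), Real.sqrt_sq hc]]
    apply Real.sqrt_le_sqrt
    apply Finset.sum_le_sum
    intro i _
    rw [hcoord i, norm_mul, mul_pow]
    exact mul_le_mul_of_nonneg_right (pow_le_pow_left₀ (norm_nonneg _) (hle i) 2) (by positivity)
  · have h1 : ‖(EuclideanSpace.single j₀ (1:ℂ) : EuclideanSpace ℂ (Fin d))‖ = 1 := by
      simp [EuclideanSpace.norm_single]
    have h2 := (LinearMap.toContinuousLinearMap
        (Matrix.toEuclideanLin (Matrix.diagonal v))).le_opNorm (EuclideanSpace.single j₀ 1)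
    rw [h1, mul_one] at h2
    refine le_trans (le_of_eq ?_) h2
    have hcoord : ∀ i, (LinearMap.toContinuousLinearMap (Matrix.toEuclideanLin (Matrix.diagonal v))
        (EuclideanSpace.single j₀ 1)) i = if i = j₀ then v j₀ else 0 := by
      intro i
      simp only [LinearMap.coe_toContinuousLinearMap', Matrix.toEuclideanLin_apply,
        Matrix.mulVec_diagonal]
      rcases eq_or_ne i j₀ with h | h <;> simp [h, EuclideanSpace.single_apply]
    symm
    rw [← hj, EuclideanSpace.norm_eq]
    rw [Finset.sum_congr rfl (fun i _ => by rw [hcoord i])]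
    rw [Finset.sum_congr rfl (fun i _ => show ‖if i = j₀ then v j₀ else (0:ℂ)‖^2
      = if i = j₀ then ‖v j₀‖^2 else 0 by rcases eq_or_ne i j₀ with h | h <;> simp [h])]
    rw [Finset.sum_ite_eq' Finset.univ j₀ (fun _ => ‖v j₀‖^2)]
    simp [Real.sqrt_sq (norm_nonneg _)]

/-- `1 + O` is unitary and `‖O‖_op = ε`. -/
theorem stmt_2 (d : ℕ) (hd : 2 ≤ d) (ε θ : ℝ) (hε0 : 0 < ε) (hε1 : ε ≤ 1)
    (hθ1 : Real.pi / 2 < θ) (hθ2 : θ ≤ Real.pi) (hcos : Real.cos θ = -ε / 2) :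
    (1 + Omat d ε θ)ᴴ * (1 + Omat d ε θ) = 1 ∧ opNorm (Omat d ε θ) = ε := by
  set v : Fin d → ℂ := fun j =>
    if Odd d ∧ (j : ℕ) = d - 1 then 0
    else if Even (j : ℕ) then (ε : ℂ) * Complex.exp (Complex.I * (θ : ℂ))
    else (ε : ℂ) * Complex.exp (-(Complex.I * (θ : ℂ))) with hv
  have hOmat : Omat d ε θ = Matrix.diagonal v := rfl
  have hcosC : Complex.cos (θ : ℂ) = -(ε : ℂ) / 2 := by
    rw [← Complex.ofReal_cos, hcos]; push_cast; ring
  have hsc : Complex.sin (θ:ℂ) ^ 2 + Complex.cos (θ:ℂ) ^ 2 = 1 := Complex.sin_sq_add_cos_sq _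
  have e1 : Complex.exp (Complex.I * (θ:ℂ)) = Complex.cos θ + Complex.sin θ * Complex.I := by
    rw [mul_comm, Complex.exp_mul_I]
  have e2 : Complex.exp (-(Complex.I * (θ:ℂ))) = Complex.cos θ - Complex.sin θ * Complex.I := by
    rw [show -(Complex.I * (θ:ℂ)) = (-(θ:ℂ)) * Complex.I by ring, Complex.exp_mul_I,
      Complex.cos_neg, Complex.sin_neg]
    ring
  have hstar1 : star ((ε:ℂ) * Complex.exp (Complex.I * (θ:ℂ)))
      = (ε:ℂ) * Complex.exp (-(Complex.I * (θ:ℂ))) := by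
    rw [e1, e2]
    simp [← Complex.ofReal_cos, ← Complex.ofReal_sin, Complex.ext_iff]
  have hstar2 : star ((ε:ℂ) * Complex.exp (-(Complex.I * (θ:ℂ))))
      = (ε:ℂ) * Complex.exp (Complex.I * (θ:ℂ)) := by
    rw [e1, e2]
    simp [← Complex.ofReal_cos, ← Complex.ofReal_sin, Complex.ext_iff]
  have hprod : (1 + (ε:ℂ) * Complex.exp (-(Complex.I * (θ:ℂ)))) *
      (1 + (ε:ℂ) * Complex.exp (Complex.I * (θ:ℂ))) = 1 := by
    rw [e1, e2]
    linear_combination (2*(ε:ℂ)) * hcosC + (ε:ℂ)^2 * hsc - (ε:ℂ)^2 * Complex.sin (θ:ℂ)^2 * Complex.I_sq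
  constructor
  · rw [hOmat, show (1 : Matrix (Fin d) (Fin d) ℂ) = Matrix.diagonal (fun _ => (1:ℂ)) from
      (Matrix.diagonal_one).symm, Matrix.diagonal_add, Matrix.diagonal_conjTranspose,
      Matrix.diagonal_mul_diagonal]
    refine congrArg Matrix.diagonal (funext fun j => ?_)
    simp only [Pi.star_apply, Pi.add_apply, star_add, star_one]
    by_cases h0 : Odd d ∧ (j : ℕ) = d - 1
    · simp [hv, h0]
    · by_cases he : Even (j : ℕ)
      · simp only [hv, h0, if_false, he, if_true, hstar1]
        exact hprod
      · simp only [hv, h0, if_false, he, hstar2]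
        rw [mul_comm]
        exact hprod
  · rw [hOmat]
    have hnorm1 : ‖Complex.exp (Complex.I * (θ:ℂ))‖ = 1 := by
      rw [Complex.norm_exp]
      simp
    have hnorm2 : ‖Complex.exp (-(Complex.I * (θ:ℂ)))‖ = 1 := by
      rw [Complex.norm_exp]
      simp
    have hεn : ‖(ε:ℂ)‖ = ε := by
      rw [Complex.norm_real, Real.norm_eq_abs, abs_of_pos hε0]
    have j₀ : Fin d := ⟨0, by omega⟩
    refine opNorm_diagonal_eq v ε (fun j => ?_) ⟨0, by omega⟩ ?_
    · by_cases h0 : Odd d ∧ (j : ℕ) = d - 1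
      · simp [hv, h0, le_of_lt hε0]
      · by_cases he : Even (j : ℕ)
        · simp [hv, h0, he, norm_mul, hnorm1, hεn, abs_of_pos hε0]
        · simp [hv, h0, he, norm_mul, hnorm2, hεn, abs_of_pos hε0]
    · have h0 : ¬(Odd d ∧ ((⟨0, by omega⟩ : Fin d) : ℕ) = d - 1) := by
        rintro ⟨-, h⟩
        simp at h
        omega
      simp [hv, h0, norm_mul, hnorm1, hεn, abs_of_pos hε0, hε0.le]


end Stmt
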